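/- Let $\mathbf{P}$ be an $m \times m$ permutation matrix, $\boldsymbol{\tau} \in \mathbb{R}^m$, $\bar{\boldsymbol{\Gamma}}$ an $m\times m$ positive-definite matrix, $\boldsymbol{\Delta}$ a $d \times m$ matrix, and $\bar{\boldsymbol{\Omega}}$ a $d\times d$ positive-definite matrix. Set $\boldsymbol{\Delta}_p = \boldsymbol{\Delta}\mathbf{P}^\top$, $\boldsymbol{\tau}_p = \mathbf{P}\boldsymbol{\tau}$, $\bar{\boldsymbol{\Gamma}}_p = \mathbf{P}\bar{\boldsymbol{\Gamma}}\mathbf{P}^\top$. Then: (i) $\bar{\boldsymbol{\Gamma}}_p - \boldsymbol{\Delta}_p^\top\bar{\boldsymbol{\Omega}}^{-1}\boldsymbol{\Delta}_p = \mathbf{P}(\bar{\boldsymbol{\Gamma}} - \boldsymbol{\Delta}^\top\bar{\boldsymbol{\Omega}}^{-1}\boldsymbol{\Delta})\mathbf{P}^\top$; (ii) $\boldsymbol{\tau}_p + \boldsymbol{\Delta}_p^\top\bar{\boldsymbol{\Omega}}^{-1}\mathbf{x} = \mathbf{P}(\boldsymbol{\tau} + \boldsymbol{\Delta}^\top\bar{\boldsymbol{\Omega}}^{-1}\mathbf{x})$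 for all $\mathbf{x} \in \mathbb{R}^d$; and (iii) for any function $G$ on $\mathbb{R}^m \times \{\text{pos.\,def.\ }m\times m\text{ matrices}\}$ invariant under simultaneous permutation, i.e., $G(\mathbf{P}\mathbf{v}, \mathbf{P}\mathbf{M}\mathbf{P}^\top) = G(\mathbf{v},\mathbf{M})$, the SUT density factor $G\{\boldsymbol{\tau}_p + \boldsymbol{\Delta}_p^\top\bar{\boldsymbol{\Omega}}^{-1}\mathbf{x},\ \bar{\boldsymbol{\Gamma}}_p - \boldsymbol{\Delta}_p^\top\bar{\boldsymbol{\Omega}}^{-1}\boldsymbol{\Delta}_p\}$ equals $G\{\boldsymbol{\tau} + \boldsymbol{\Delta}^\top\bar{\boldsymbol{\Omega}}^{-1}\mathbf{x},\ \bar{\boldsymbol{\Gamma}} - \boldsymbol{\Delta}^\top\bar{\boldsymbol{\Omega}}^{-1}\boldsymbol{\Delta}\}$, establishing non-identifiability of the SUT parameters under latent permutations. -/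

import Mathlib

open Matrix

section

variable {R l m n : Type*} [CommRing R] [Fintype l] [Fintype m]

theorem Matrix.mul_mul_transpose_sub_transpose_mul_mul (P : Matrix n m R) (Γ : Matrix m m R)
    (Δ : Matrix l m R) (W : Matrix l l R) :
    P * Γ * Pᵀ - (Δ * Pᵀ)ᵀ * W * (Δ * Pᵀ) = P * (Γ - Δᵀ * W * Δ) * Pᵀ := by
  simp only [transpose_mul, transpose_transpose, Matrix.mul_sub, Matrix.sub_mul, Matrix.mul_assoc]

theorem Matrix.mulVec_add_transpose_mul_mulVec (P : Matrix n m R) (τ : m → R)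
    (Δ : Matrix l m R) (y : l → R) :
    P *ᵥ τ + (Δ * Pᵀ)ᵀ *ᵥ y = P *ᵥ (τ + Δᵀ *ᵥ y) := by
  rw [transpose_mul, transpose_transpose, mulVec_add, mulVec_mulVec]

end

theorem stmt17_general {m d : ℕ}
    (Pm : Matrix (Fin m) (Fin m) ℝ)
    (τ : Fin m → ℝ) (Γ : Matrix (Fin m) (Fin m) ℝ)
    (Δ : Matrix (Fin d) (Fin m) ℝ) (Ωb : Matrix (Fin d) (Fin d) ℝ)
    (hres : (Γ - Δᵀ * Ωb⁻¹ * Δ).PosDef) :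
    -- (i)
    (Pm * Γ * Pmᵀ - (Δ * Pmᵀ)ᵀ * Ωb⁻¹ * (Δ * Pmᵀ) = Pm * (Γ - Δᵀ * Ωb⁻¹ * Δ) * Pmᵀ) ∧
    -- (ii)
    (∀ x : Fin d → ℝ, Pm *ᵥ τ + (Δ * Pmᵀ)ᵀ *ᵥ (Ωb⁻¹ *ᵥ x) =
      Pm *ᵥ (τ + Δᵀ *ᵥ (Ωb⁻¹ *ᵥ x))) ∧
    -- (iii)
    (∀ G : (Fin m → ℝ) → Matrix (Fin m) (Fin m) ℝ → ℝ,
      (∀ (v : Fin m → ℝ) (M : Matrix (Fin m) (Fin m) ℝ), M.PosDef →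
        G (Pm *ᵥ v) (Pm * M * Pmᵀ) = G v M) →
      ∀ x : Fin d → ℝ,
        G (Pm *ᵥ τ + (Δ * Pmᵀ)ᵀ *ᵥ (Ωb⁻¹ *ᵥ x))
            (Pm * Γ * Pmᵀ - (Δ * Pmᵀ)ᵀ * Ωb⁻¹ * (Δ * Pmᵀ)) =
          G (τ + Δᵀ *ᵥ (Ωb⁻¹ *ᵥ x)) (Γ - Δᵀ * Ωb⁻¹ * Δ)) := by
  refine ⟨mul_mul_transpose_sub_transpose_mul_mul .., fun x => mulVec_add_transpose_mul_mulVec .., ?_⟩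
  intro G hG x
  rw [mul_mul_transpose_sub_transpose_mul_mul, mulVec_add_transpose_mul_mulVec, hG _ _ hres]

theorem stmt17 {m d : ℕ} (σ : Equiv.Perm (Fin m))
    (Pm : Matrix (Fin m) (Fin m) ℝ)
    (hPm : Pm = (σ.toPEquiv.toMatrix : Matrix (Fin m) (Fin m) ℝ))
    (τ : Fin m → ℝ) (Γ : Matrix (Fin m) (Fin m) ℝ) (hΓ : Γ.PosDef)
    (Δ : Matrix (Fin d) (Fin m) ℝ) (Ωb : Matrix (Fin d) (Fin d) ℝ) (hΩ : Ωb.PosDef)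
    (hres : (Γ - Δᵀ * Ωb⁻¹ * Δ).PosDef) :
    -- (i)
    (Pm * Γ * Pmᵀ - (Δ * Pmᵀ)ᵀ * Ωb⁻¹ * (Δ * Pmᵀ) = Pm * (Γ - Δᵀ * Ωb⁻¹ * Δ) * Pmᵀ) ∧
    -- (ii)
    (∀ x : Fin d → ℝ, Pm *ᵥ τ + (Δ * Pmᵀ)ᵀ *ᵥ (Ωb⁻¹ *ᵥ x) =
      Pm *ᵥ (τ + Δᵀ *ᵥ (Ωb⁻¹ *ᵥ x))) ∧
    -- (iii)
    (∀ G : (Fin m → ℝ) → Matrix (Fin m) (Fin m) ℝ → ℝ,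
      (∀ (v : Fin m → ℝ) (M : Matrix (Fin m) (Fin m) ℝ), M.PosDef →
        G (Pm *ᵥ v) (Pm * M * Pmᵀ) = G v M) →
      ∀ x : Fin d → ℝ,
        G (Pm *ᵥ τ + (Δ * Pmᵀ)ᵀ *ᵥ (Ωb⁻¹ *ᵥ x))
            (Pm * Γ * Pmᵀ - (Δ * Pmᵀ)ᵀ * Ωb⁻¹ * (Δ * Pmᵀ)) =
          G (τ + Δᵀ *ᵥ (Ωb⁻¹ *ᵥ x)) (Γ - Δᵀ * Ωb⁻¹ * Δ)) :=
  stmt17_general Pm τ Γ Δ Ωb hres
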